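/- arXiv:1302.5896 — 2 statements merged into one kernel-verified Lean document; each statement's English description precedes it below -/
import Mathlib

section
/- Let (X,d) be a finite ultrametric space with |X| ≥ 2, and let X_1,...,X_k be the parts of the complete multipartite diametral graph G_d (i.e., the equivalence classes of the relation d(u,v) < diam X). Then each X_i is a closed ball in X; more precisely, for any x_i ∈ X_i, X_i = {x ∈ X : d(x,x_i) ≤ diam X_i}. -/
/-- An ultrametric space: a metric space satisfying the strong triangle inequality. -/
def IsUltrametric (X : Type*) [MetricSpace X] : Prop :=
  ∀ x y z : X, dist x y ≤ max (dist x z) (dist z y)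

/-- The ballean of a metric space: closed balls whose radius is realized as a
distance from the center (i.e. lies in the spectrum `Sp_t(X)`). -/
def Ballean (X : Type*) [MetricSpace X] : Set (Set X) :=
  {B | ∃ t r, (∃ x : X, dist x t = r) ∧ B = Metric.closedBall t r}

/-- A ball-preserving map: images of balls of `B_X` are in `B_Y`, preimages of
balls of `B_Y` are in `B_X`. -/
def BallPreserving {X Y : Type*} [MetricSpace X] [MetricSpace Y] (F : X → Y) : Prop :=
  (∀ Z ∈ Ballean X, F '' Z ∈ Ballean Y) ∧ (∀ W ∈ Ballean Y, F ⁻¹' W ∈ Ballean X)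

/-! In an ultrametric space a closed ball of radius `ρ` has diameter at most `ρ`. When `X` is
finite and `r = diam X > 0`, the ball `B = {x | dist x x₀ < r}` lies in the closed ball of radius
`ρ = max_{x ∈ B} dist x x₀ < r`, so `diam B < r`. Hence every point within `diam B` of `x₀` lies
in `B`, and conversely every point of `B` is within `diam B` of `x₀ ∈ B`. -/

open Metric

lemma IsUltrametric.isUltrametricDist {X : Type*} [MetricSpace X] (hX : IsUltrametric X) :
    IsUltrametricDist X :=
  ⟨fun x y z => hX x z y⟩

section Ultrametric

variable {X : Type*} [MetricSpace X] [IsUltrametricDist X]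

lemma IsUltrametricDist.diam_closedBall_le {c : X} {r : ℝ} (hr : 0 ≤ r) :
    diam (closedBall c r) ≤ r :=
  diam_le_of_forall_dist_le hr fun x hx y hy =>
    calc dist x y ≤ max (dist x c) (dist c y) := dist_triangle_max x c y
      _ ≤ r := max_le hx (by rwa [dist_comm, ← mem_closedBall])

lemma IsUltrametricDist.diam_ball_lt_of_finite {c : X} {r : ℝ} (hfin : (ball c r).Finite)
    (hr : 0 < r) : diam (ball c r) < r := by
  obtain ⟨m, hm, hmax⟩ :=
    Set.exists_max_image (ball c r) (dist · c) hfin ⟨c, mem_ball_self hr⟩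
  calc diam (ball c r) ≤ diam (closedBall c (dist m c)) :=
        diam_mono (fun x hx => hmax x hx) isBounded_closedBall
    _ ≤ dist m c := diam_closedBall_le dist_nonneg
    _ < r := hm

lemma IsUltrametricDist.ball_eq_closedBall_diam_of_finite {c : X} {r : ℝ}
    (hfin : (ball c r).Finite) (hr : 0 < r) :
    ball c r = closedBall c (diam (ball c r)) := by
  apply subset_antisymm
  · exact fun x hx => dist_le_diam_of_mem hfin.isBounded hx (mem_ball_self hr)
  · exact closedBall_subset_ball (diam_ball_lt_of_finite hfin hr)

end Ultrametric

lemma diam_univ_pos_of_two_le_card {X : Type*} [MetricSpace X] [Fintype X]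
    (hcard : 2 ≤ Fintype.card X) : 0 < diam (Set.univ : Set X) :=
  have : Nontrivial X := Fintype.one_lt_card_iff_nontrivial.mp hcard
  diam_pos Set.nontrivial_univ Set.finite_univ.isBounded

theorem diametral_class_is_ball {X : Type*} [MetricSpace X] [Fintype X]
    (hX : IsUltrametric X) (hcard : 2 ≤ Fintype.card X) (x₀ : X) :
    {x : X | dist x x₀ < Metric.diam (Set.univ : Set X)} =
      {x : X | dist x x₀ ≤ Metric.diam {y : X | dist y x₀ < Metric.diam (Set.univ : Set X)}} := by
  have := hX.isUltrametricDist
  exact IsUltrametricDist.ball_eq_closedBall_diam_of_finite (Set.toFinite _)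
    (diam_univ_pos_of_two_le_card hcard)
end

section
/- Let (X,d) be a finite ultrametric space and P a poset isomorphism of (B_X, ⊆) onto (B_Y, ⊆) for a finite ultrametric space Y. Then P maps singletons to singletons, and the induced map φ : X → Y defined by {φ(x)} = P({x}) is a ball-preserving bijection with P(B) = φ(B) for every B ∈ B_X. -/
/-!
A ballean consists of nonempty sets and contains every singleton. In any such family of sets
ordered by inclusion the minimal elements are exactly the singletons, so an order isomorphism
`P` induces a bijection `φ` of the points. Since a set is the union of the singletons below
it, `P B = φ '' B` for every member `B`.
-/

section SingletonFamily

variable {α β : Type*} {S : Set (Set α)} {T : Set (Set β)}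

theorem isMin_iff_eq_singleton (hS : ∀ a, {a} ∈ S) (hne : ∀ B ∈ S, B.Nonempty)
    {B : {B // B ∈ S}} : IsMin B ↔ ∃ a, (B : Set α) = {a} := by
  constructor
  · intro hmin
    obtain ⟨a, ha⟩ := hne B B.2
    have hle : (⟨{a}, hS a⟩ : {B // B ∈ S}) ≤ B := Set.singleton_subset_iff.2 ha
    exact ⟨a, congrArg Subtype.val ((hmin hle).antisymm hle)⟩
  · rintro ⟨a, hB⟩ C hC
    obtain ⟨c, hc⟩ := hne C C.2
    have hca : c = a := by simpa [hB] using (hC : (C : Set α) ⊆ B) hc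
    show (B : Set α) ⊆ C
    rw [hB, Set.singleton_subset_iff, ← hca]
    exact hc

theorem OrderIso.exists_apply_singleton_eq (hS : ∀ a, {a} ∈ S) (hne : ∀ B ∈ S, B.Nonempty)
    (hT : ∀ b, {b} ∈ T) (hne' : ∀ B ∈ T, B.Nonempty)
    (P : {B // B ∈ S} ≃o {B // B ∈ T}) (a : α) :
    ∃ b, (P ⟨{a}, hS a⟩ : Set β) = {b} := by
  rw [← isMin_iff_eq_singleton hT hne', P.isMin_apply, isMin_iff_eq_singleton hS hne]
  exact ⟨a, rfl⟩

theorem OrderIso.exists_bijective_apply_eq_image (hS : ∀ a, {a} ∈ S)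
    (hne : ∀ B ∈ S, B.Nonempty) (hT : ∀ b, {b} ∈ T) (hne' : ∀ B ∈ T, B.Nonempty)
    (P : {B // B ∈ S} ≃o {B // B ∈ T}) :
    ∃ φ : α → β, Function.Bijective φ ∧ ∀ B : {B // B ∈ S}, (P B : Set β) = φ '' B := by
  choose φ hφ using P.exists_apply_singleton_eq hS hne hT hne'
  have mem_iff : ∀ a (B : {B // B ∈ S}), φ a ∈ (P B : Set β) ↔ a ∈ (B : Set α) := by
    intro a B
    rw [← Set.singleton_subset_iff, ← hφ a, ← Set.singleton_subset_iff]
    exact P.le_iff_le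
  have hinj : Function.Injective φ := fun a a' h => by
    simpa using (mem_iff a ⟨{a'}, hS a'⟩).1 (by rw [hφ, h]; rfl)
  have hsurj : Function.Surjective φ := fun b => by
    obtain ⟨a, ha⟩ := P.symm.exists_apply_singleton_eq hT hne' hS hne b
    refine ⟨a, ?_⟩
    simpa [ha] using (mem_iff a (P.symm ⟨{b}, hT b⟩)).2
  refine ⟨φ, ⟨hinj, hsurj⟩, fun B => Set.ext fun b => ?_⟩
  obtain ⟨a, rfl⟩ := hsurj b
  rw [mem_iff, hinj.mem_set_image]

end SingletonFamily

theorem singleton_mem_ballean {X : Type*} [MetricSpace X] (x : X) : {x} ∈ Ballean X :=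
  ⟨x, 0, ⟨x, dist_self x⟩, Metric.closedBall_zero.symm⟩

theorem Ballean.nonempty {X : Type*} [MetricSpace X] {B : Set X} (hB : B ∈ Ballean X) :
    B.Nonempty := by
  obtain ⟨t, r, ⟨x, rfl⟩, rfl⟩ := hB
  exact ⟨t, Metric.mem_closedBall_self dist_nonneg⟩

theorem orderIso_induces_ballPreserving_general {X Y : Type*} [MetricSpace X] [MetricSpace Y]
    (P : {B // B ∈ Ballean X} ≃o {B // B ∈ Ballean Y}) :
    ∃ φ : X → Y, Function.Bijective φ ∧ BallPreserving φ ∧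
      (∀ x : X, ∀ hx : ({x} : Set X) ∈ Ballean X,
        (P ⟨{x}, hx⟩ : Set Y) = {φ x}) ∧
      (∀ B : Set X, ∀ hB : B ∈ Ballean X, (P ⟨B, hB⟩ : Set Y) = φ '' B) := by
  obtain ⟨φ, hφ, hP⟩ := P.exists_bijective_apply_eq_image singleton_mem_ballean
    (fun _ => Ballean.nonempty) singleton_mem_ballean (fun _ => Ballean.nonempty)
  have himage : ∀ B hB, (P ⟨B, hB⟩ : Set Y) = φ '' B := fun B hB => hP ⟨B, hB⟩
  have hpreimage : ∀ W hW, φ ⁻¹' W = (P.symm ⟨W, hW⟩ : Set X) := fun W hW => by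
    have hW' : W = φ '' (P.symm ⟨W, hW⟩ : Set X) := by
      rw [← hP, P.apply_symm_apply]
    conv_lhs => rw [hW']
    exact Set.preimage_image_eq _ hφ.injective
  refine ⟨φ, hφ, ⟨fun Z hZ => ?_, fun W hW => ?_⟩, fun x hx => ?_, himage⟩
  · exact himage Z hZ ▸ (P ⟨Z, hZ⟩).2
  · exact hpreimage W hW ▸ (P.symm ⟨W, hW⟩).2
  · rw [himage, Set.image_singleton]

theorem orderIso_induces_ballPreserving {X Y : Type*} [MetricSpace X] [MetricSpace Y]
    [Fintype X] [Fintype Y] [Nonempty X] [Nonempty Y]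
    (hX : IsUltrametric X) (hY : IsUltrametric Y)
    (P : {B // B ∈ Ballean X} ≃o {B // B ∈ Ballean Y}) :
    ∃ φ : X → Y, Function.Bijective φ ∧ BallPreserving φ ∧
      (∀ x : X, ∀ hx : ({x} : Set X) ∈ Ballean X,
        (P ⟨{x}, hx⟩ : Set Y) = {φ x}) ∧
      (∀ B : Set X, ∀ hB : B ∈ Ballean X, (P ⟨B, hB⟩ : Set Y) = φ '' B) :=
  orderIso_induces_ballPreserving_general P
end
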